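/- Let $\kappa>0$. There exists a smooth even function $\hat\phi_\kappa:\mathbb R\to\mathbb R$ (i.e., $\hat\phi_\kappa(y)=\hat\phi_\kappa(-y)$) satisfying $\mathcal J_1\hat\phi_\kappa(y)=0$ for all $y\in\mathbb R$ together with the estimate $0\le\hat\phi_\kappa(y)-\kappa y\le\min\Big\{\frac{2e(\kappa+2)}{y}e^{-y^2/4},\,3\kappa+2\Big\}$ for every $y\in(0,\infty)$; in particular $\lim_{y\to\infty}\hat\phi_\kappa(y)/y=\kappa$. -/

import Mathlib

/-- The one-dimensional self-expander operator
`𝒥₁ u (y) = u''/(1+u'^2) + (y/2) u' - u/2`. -/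
noncomputable def J1 (u : ℝ → ℝ) (y : ℝ) : ℝ :=
  deriv (deriv u) y / (1 + (deriv u y) ^ 2) + y / 2 * deriv u y - u y / 2

/-!
Write `φ = c E + y tan A`. Then `𝒥₁ φ = 0` holds as soon as `A' = c E / 2` and
`E = exp (-∫₀ʸ (s/2)(1 + tan² A))`, since then `φ' = tan A` and `φ'' / (1 + φ'²) = c E / 2`.
Imposing `A(∞) = arctan κ` turns this system into a fixed-point equation for the slope
`v = tan A` on `[0, ∞)`, whose right-hand side is monotone in `v`: if `w² ≤ v²` then
`E_w / E_v` is nondecreasing, and a Chebyshev-type inequality compares the normalised primitives.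
Knaster–Tarski on nondecreasing functions with values in `[0, κ]` gives a fixed point; `E` is even
and `A` odd, so `φ` is even, and smoothness follows by bootstrapping `A' = c E / 2`.

For the estimates, `D = φ - κ y` satisfies `D - y D' = c E`, i.e. `(D / y)' = -c E / y²`, and
`D / y → 0`. Comparing derivatives with those of `0`, `c / y` and `c e^{-y²/4} / y²` gives
`0 ≤ D ≤ c` and `D ≤ c e^{-y²/4} / y`, while the Gaussian lower bound on `∫₀^∞ E` gives
`c ≤ 2 (1 + κ)`.
-/

open Real MeasureTheory Set Filter Topology
open scoped ContDiff

theorem le_of_hasDerivAt_of_tendsto_sub_atTop {a : ℝ} {f g f' g' : ℝ → ℝ}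
    (hf : ∀ x ∈ Ioi a, HasDerivAt f (f' x) x) (hg : ∀ x ∈ Ioi a, HasDerivAt g (g' x) x)
    (hle : ∀ x ∈ Ioi a, g' x ≤ f' x) (hlim : Tendsto (fun x => f x - g x) atTop (𝓝 0))
    {x : ℝ} (hx : a < x) : f x ≤ g x := by
  have hderiv : ∀ y ∈ Ioi a, HasDerivAt (fun x => f x - g x) (f' y - g' y) y :=
    fun y hy => (hf y hy).sub (hg y hy)
  have hmono : MonotoneOn (fun x => f x - g x) (Ioi a) := by
    refine monotoneOn_of_hasDerivWithinAt_nonneg (f' := fun y => f' y - g' y) (convex_Ioi a)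
      (fun y hy => (hderiv y hy).continuousAt.continuousWithinAt) ?_ ?_
    · rw [interior_Ioi]
      exact fun y hy => (hderiv y hy).hasDerivWithinAt
    · rw [interior_Ioi]
      exact fun y hy => sub_nonneg.2 (hle y hy)
  have : f x - g x ≤ 0 := ge_of_tendsto hlim <| by
    filter_upwards [eventually_ge_atTop x] with y hy
    exact hmono hx (lt_of_lt_of_le hx hy) hy
  linarith

theorem contDiff_infty_of_contDiff_deriv {𝕜 F : Type*} [NontriviallyNormedField 𝕜]
    [NormedAddCommGroup F] [NormedSpace 𝕜 F] {f : 𝕜 → F} (hf : Differentiable 𝕜 f)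
    (h : ∀ n : ℕ, ContDiff 𝕜 n f → ContDiff 𝕜 n (deriv f)) : ContDiff 𝕜 ∞ f := by
  refine contDiff_infty.2 fun n => ?_
  induction n with
  | zero => exact contDiff_zero.2 hf.continuous
  | succ n ih => exact contDiff_succ_iff_deriv.2 ⟨hf, by simp, h n ih⟩

theorem ContDiff.tan {n : WithTop ℕ∞} {f : ℝ → ℝ} (hf : ContDiff ℝ n f)
    (h : ∀ x, Real.cos (f x) ≠ 0) : ContDiff ℝ n fun x => Real.tan (f x) :=
  contDiff_iff_contDiffAt.2 fun x => (contDiffAt_tan.2 (h x)).comp x hf.contDiffAt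

theorem integral_Ioc_mul_integral_Ioi_le {f g : ℝ → ℝ} {a m : ℝ} (ham : a ≤ m)
    (hf : IntegrableOn f (Ioi a)) (hg : IntegrableOn g (Ioi a))
    (hcross : ∀ t ∈ Ioc a m, ∀ s ∈ Ioi m, f t * g s ≤ g t * f s) :
    (∫ t in Ioc a m, f t) * ∫ s in Ioi a, g s ≤ (∫ t in Ioc a m, g t) * ∫ s in Ioi a, f s := by
  have split : ∀ {h : ℝ → ℝ}, IntegrableOn h (Ioi a) →
      ∫ s in Ioi a, h s = (∫ s in Ioc a m, h s) + ∫ s in Ioi m, h s := fun hh => by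
    rw [← Ioc_union_Ioi_eq_Ioi ham]
    exact setIntegral_union Ioc_disjoint_Ioi_same measurableSet_Ioi
      (hh.mono_set Ioc_subset_Ioi_self) (hh.mono_set (Ioi_subset_Ioi ham))
  have tail : (∫ t in Ioc a m, f t) * ∫ s in Ioi m, g s
      ≤ (∫ t in Ioc a m, g t) * ∫ s in Ioi m, f s := by
    have hfS := hf.mono_set (Ioc_subset_Ioi_self : Ioc a m ⊆ Ioi a)
    have hgS := hg.mono_set (Ioc_subset_Ioi_self : Ioc a m ⊆ Ioi a)
    rw [← integral_const_mul, ← integral_const_mul]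
    refine setIntegral_mono_on ((hg.mono_set (Ioi_subset_Ioi ham)).const_mul _)
      ((hf.mono_set (Ioi_subset_Ioi ham)).const_mul _) measurableSet_Ioi fun s hs => ?_
    rw [← integral_mul_const, ← integral_mul_const]
    exact setIntegral_mono_on (hfS.mul_const _) (hgS.mul_const _) measurableSet_Ioc
      fun t ht => hcross t ht s hs
  rw [split hf, split hg]
  nlinarith [tail]

theorem tan_le_tan_of_nonneg_of_le {x y : ℝ} (hx : 0 ≤ x) (hxy : x ≤ y) (hy : y < π / 2) :
    tan x ≤ tan y :=
  strictMonoOn_tan.monotoneOn ⟨by linarith [pi_pos], by linarith⟩ ⟨by linarith [pi_pos], hy⟩ hxy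

theorem tan_mem_Icc_of_mem_Icc_arctan {θ κ : ℝ} (hθ : θ ∈ Icc 0 (arctan κ)) :
    tan θ ∈ Icc 0 κ :=
  ⟨tan_nonneg_of_nonneg_of_le_pi_div_two hθ.1 (hθ.2.trans (arctan_lt_pi_div_two κ).le),
    by simpa using tan_le_tan_of_nonneg_of_le hθ.1 hθ.2 (arctan_lt_pi_div_two κ)⟩

namespace SelfExpander

noncomputable def expo (v : ℝ → ℝ) (y : ℝ) : ℝ := ∫ s in 0..y, s / 2 * (1 + v |s| ^ 2)

noncomputable def weight (v : ℝ → ℝ) (y : ℝ) : ℝ := exp (-expo v y)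

noncomputable def mass (v : ℝ → ℝ) : ℝ := ∫ s in Ioi 0, weight v s

noncomputable def angle (κ : ℝ) (v : ℝ → ℝ) (y : ℝ) : ℝ :=
  arctan κ * (∫ s in 0..y, weight v s) / mass v

section Weight

variable {v w : ℝ → ℝ} {C : ℝ}

theorem expo_neg (v : ℝ → ℝ) (y : ℝ) : expo v (-y) = expo v y := by
  have h := intervalIntegral.integral_comp_neg (a := 0) (b := y)
    (fun s : ℝ => s / 2 * (1 + v |s| ^ 2))
  simp only [abs_neg, neg_zero] at h
  rw [expo, expo, intervalIntegral.integral_symm, ← h, ← intervalIntegral.integral_neg]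
  congr 1
  ext s
  ring

theorem intervalIntegrable_expo_integrand (hv : Measurable v) (hC : ∀ s, |v s| ≤ C)
    (a b : ℝ) : IntervalIntegrable (fun s => s / 2 * (1 + v |s| ^ 2)) volume a b := by
  rw [intervalIntegrable_iff]
  refine ((continuous_id.div_const 2).intervalIntegrable a b).def'.mul_bdd
    (by fun_prop : Measurable fun s => 1 + v |s| ^ 2).aestronglyMeasurable
    (c := 1 + C ^ 2) (ae_of_all _ fun s => ?_)
  have := sq_le_sq' (abs_le.1 (hC |s|)).1 (abs_le.1 (hC |s|)).2
  rw [norm_of_nonneg (by positivity)]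
  linarith

theorem sq_div_four_le_expo (hv : Measurable v) (hC : ∀ s, |v s| ≤ C) {y : ℝ} (hy : 0 ≤ y) :
    y ^ 2 / 4 ≤ expo v y := by
  calc y ^ 2 / 4 = ∫ s in 0..y, s / 2 := by
        rw [intervalIntegral.integral_div, integral_id]; ring
    _ ≤ expo v y := by
        refine intervalIntegral.integral_mono_on hy
          ((continuous_id.div_const 2).intervalIntegrable 0 y)
          (intervalIntegrable_expo_integrand hv hC 0 y) fun s hs => ?_
        nlinarith [hs.1, sq_nonneg (v |s|)]

theorem expo_le (hv : Measurable v) (hC : ∀ s, |v s| ≤ C) {y : ℝ} (hy : 0 ≤ y) :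
    expo v y ≤ (1 + C ^ 2) / 4 * y ^ 2 := by
  calc expo v y ≤ ∫ s in 0..y, s / 2 * (1 + C ^ 2) := by
        refine intervalIntegral.integral_mono_on hy
          (intervalIntegrable_expo_integrand hv hC 0 y)
          (((continuous_id.div_const 2).mul_const _).intervalIntegrable 0 y) fun s hs => ?_
        have := sq_le_sq' (abs_le.1 (hC |s|)).1 (abs_le.1 (hC |s|)).2
        nlinarith [hs.1]
    _ = (1 + C ^ 2) / 4 * y ^ 2 := by
        rw [intervalIntegral.integral_mul_const, intervalIntegral.integral_div, integral_id]
        ring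

theorem expo_sub_expo_le_of_sq_le (hv : Measurable v) (hw : Measurable w)
    (hvC : ∀ s, |v s| ≤ C) (hwC : ∀ s, |w s| ≤ C) (hwv : ∀ s, w s ^ 2 ≤ v s ^ 2)
    {t s : ℝ} (ht : 0 ≤ t) (hts : t ≤ s) : expo v t - expo w t ≤ expo v s - expo w s := by
  have hsub : ∀ {u : ℝ → ℝ}, Measurable u → (∀ s, |u s| ≤ C) →
      expo u s - expo u t = ∫ r in t..s, r / 2 * (1 + u |r| ^ 2) := fun hu huC =>
    intervalIntegral.integral_interval_sub_left (intervalIntegrable_expo_integrand hu huC 0 s)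
      (intervalIntegrable_expo_integrand hu huC 0 t)
  have : (∫ r in t..s, r / 2 * (1 + w |r| ^ 2)) ≤ ∫ r in t..s, r / 2 * (1 + v |r| ^ 2) :=
    intervalIntegral.integral_mono_on hts (intervalIntegrable_expo_integrand hw hwC t s)
      (intervalIntegrable_expo_integrand hv hvC t s) fun r hr => by
        have : 0 ≤ r / 2 := by linarith [hr.1]
        have := hwv |r|
        gcongr
  linarith [hsub hv hvC, hsub hw hwC]

theorem continuous_expo (hv : Measurable v) (hC : ∀ s, |v s| ≤ C) : Continuous (expo v) :=
  intervalIntegral.continuous_primitive (intervalIntegrable_expo_integrand hv hC) 0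

theorem hasDerivAt_expo (hv : Continuous v) (y : ℝ) :
    HasDerivAt (expo v) (y / 2 * (1 + v |y| ^ 2)) y := by
  have hc : Continuous fun s => s / 2 * (1 + v |s| ^ 2) := by fun_prop
  exact intervalIntegral.integral_hasDerivAt_right (hc.intervalIntegrable 0 y)
    (hc.stronglyMeasurableAtFilter _ _) hc.continuousAt

theorem weight_pos (v : ℝ → ℝ) (y : ℝ) : 0 < weight v y := exp_pos _

theorem weight_neg (v : ℝ → ℝ) (y : ℝ) : weight v (-y) = weight v y := by
  rw [weight, weight, expo_neg]

theorem weight_le_exp (hv : Measurable v) (hC : ∀ s, |v s| ≤ C) {y : ℝ} (hy : 0 ≤ y) :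
    weight v y ≤ exp (-(y ^ 2) / 4) := by
  rw [weight, exp_le_exp]
  linarith [sq_div_four_le_expo hv hC hy]

theorem weight_le_one (hv : Measurable v) (hC : ∀ s, |v s| ≤ C) {y : ℝ} (hy : 0 ≤ y) :
    weight v y ≤ 1 :=
  (weight_le_exp hv hC hy).trans (exp_le_one_iff.2 (by nlinarith [sq_nonneg y]))

theorem exp_le_weight (hv : Measurable v) (hC : ∀ s, |v s| ≤ C) {y : ℝ} (hy : 0 ≤ y) :
    exp (-((1 + C ^ 2) / 4) * y ^ 2) ≤ weight v y := by
  rw [weight, exp_le_exp]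
  linarith [expo_le hv hC hy]

theorem continuous_weight (hv : Measurable v) (hC : ∀ s, |v s| ≤ C) : Continuous (weight v) :=
  (continuous_expo hv hC).neg.rexp

theorem integrableOn_weight (hv : Measurable v) (hC : ∀ s, |v s| ≤ C) :
    IntegrableOn (weight v) (Ioi 0) := by
  refine (integrable_exp_neg_mul_sq (by norm_num : (0 : ℝ) < 1 / 4)).integrableOn.mono'
    (continuous_weight hv hC).aestronglyMeasurable
    ((ae_restrict_iff' measurableSet_Ioi).2 (ae_of_all _ fun s hs => ?_))
  rw [norm_of_nonneg (weight_pos v s).le, show -(1 / 4) * s ^ 2 = -(s ^ 2) / 4 by ring]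
  exact weight_le_exp hv hC (le_of_lt hs)

theorem sqrt_pi_div_le_mass (hv : Measurable v) (hC : ∀ s, |v s| ≤ C) :
    √(π / (1 + C ^ 2)) ≤ mass v := by
  have hb : (0 : ℝ) < (1 + C ^ 2) / 4 := by positivity
  calc √(π / (1 + C ^ 2)) = √(π / ((1 + C ^ 2) / 4)) / 2 := by
        rw [div_div_eq_mul_div, mul_comm, mul_div_assoc, sqrt_mul (by norm_num),
          show √4 = 2 by rw [show (4 : ℝ) = 2 ^ 2 by norm_num, sqrt_sq two_pos.le]]
        ring
    _ = ∫ s in Ioi 0, exp (-((1 + C ^ 2) / 4) * s ^ 2) := (integral_gaussian_Ioi _).symm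
    _ ≤ mass v := setIntegral_mono_on (integrable_exp_neg_mul_sq hb).integrableOn
        (integrableOn_weight hv hC) measurableSet_Ioi fun s hs => exp_le_weight hv hC (le_of_lt hs)

theorem mass_pos (hv : Measurable v) (hC : ∀ s, |v s| ≤ C) : 0 < mass v :=
  lt_of_lt_of_le (sqrt_pos.2 (by positivity)) (sqrt_pi_div_le_mass hv hC)

theorem integral_weight_le_mass (hv : Measurable v) (hC : ∀ s, |v s| ≤ C) {y : ℝ}
    (hy : 0 ≤ y) : ∫ s in 0..y, weight v s ≤ mass v := by
  rw [intervalIntegral.integral_of_le hy]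
  exact setIntegral_mono_set (integrableOn_weight hv hC)
    (ae_of_all _ fun s => (weight_pos v s).le) Ioc_subset_Ioi_self.eventuallyLE

end Weight

section Angle

variable {κ C : ℝ} {v w : ℝ → ℝ}

theorem angle_neg (κ : ℝ) (v : ℝ → ℝ) (y : ℝ) : angle κ v (-y) = -angle κ v y := by
  have h := intervalIntegral.integral_comp_neg (a := 0) (b := y) (weight v)
  simp only [weight_neg, neg_zero] at h
  rw [angle, angle, intervalIntegral.integral_symm, ← h]
  ring

theorem angle_mem_Icc (hκ : 0 ≤ κ) (hv : Measurable v) (hC : ∀ s, |v s| ≤ C) {y : ℝ}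
    (hy : 0 ≤ y) : angle κ v y ∈ Icc 0 (arctan κ) := by
  have hb : 0 ≤ arctan κ := arctan_nonneg.2 hκ
  have hP : 0 ≤ ∫ s in 0..y, weight v s :=
    intervalIntegral.integral_nonneg hy fun s _ => (weight_pos v s).le
  have hratio : (∫ s in 0..y, weight v s) / mass v ≤ 1 :=
    (div_le_one (mass_pos hv hC)).2 (integral_weight_le_mass hv hC hy)
  rw [angle, mul_div_assoc]
  exact ⟨mul_nonneg hb (div_nonneg hP (mass_pos hv hC).le), mul_le_of_le_one_right hb hratio⟩

theorem abs_angle_le (hκ : 0 ≤ κ) (hv : Measurable v) (hC : ∀ s, |v s| ≤ C) (y : ℝ) :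
    |angle κ v y| ≤ arctan κ := by
  rcases le_total 0 y with hy | hy
  · obtain ⟨h0, h1⟩ := angle_mem_Icc hκ hv hC hy
    exact abs_le.2 ⟨by linarith, h1⟩
  · obtain ⟨h0, h1⟩ := angle_mem_Icc hκ hv hC (neg_nonneg.2 hy)
    rw [angle_neg] at h0 h1
    exact abs_le.2 ⟨by linarith, by linarith⟩

theorem cos_angle_pos (hκ : 0 ≤ κ) (hv : Measurable v) (hC : ∀ s, |v s| ≤ C) (y : ℝ) :
    0 < cos (angle κ v y) :=
  cos_pos_of_mem_Ioo (abs_lt.1 ((abs_angle_le hκ hv hC y).trans_lt (arctan_lt_pi_div_two κ)))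

theorem monotone_angle (hκ : 0 ≤ κ) (hv : Measurable v) (hC : ∀ s, |v s| ≤ C) :
    Monotone (angle κ v) := by
  intro x y hxy
  have hint := (continuous_weight hv hC).intervalIntegrable (μ := volume)
  have hsub := intervalIntegral.integral_interval_sub_left (hint 0 y) (hint 0 x)
  have hxy' : 0 ≤ ∫ s in x..y, weight v s :=
    intervalIntegral.integral_nonneg hxy fun s _ => (weight_pos v s).le
  rw [angle, angle, mul_div_assoc, mul_div_assoc]
  exact mul_le_mul_of_nonneg_left (div_le_div_of_nonneg_right (by linarith) (mass_pos hv hC).le)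
    (arctan_nonneg.2 hκ)

theorem angle_le_angle_of_sq_le (hκ : 0 ≤ κ) (hv : Measurable v) (hw : Measurable w)
    (hvC : ∀ s, |v s| ≤ C) (hwC : ∀ s, |w s| ≤ C) (hwv : ∀ s, w s ^ 2 ≤ v s ^ 2) {y : ℝ}
    (hy : 0 ≤ y) : angle κ w y ≤ angle κ v y := by
  -- `weight w / weight v` is nondecreasing on `[0, ∞)`
  have hcross : ∀ t ∈ Ioc 0 y, ∀ s ∈ Ioi y,
      weight w t * weight v s ≤ weight v t * weight w s := fun t ht s hs => by
    simp only [weight, ← exp_add, exp_le_exp]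
    linarith [expo_sub_expo_le_of_sq_le hv hw hvC hwC hwv ht.1.le (ht.2.trans hs.le)]
  have hratio : (∫ s in 0..y, weight w s) / mass w ≤ (∫ s in 0..y, weight v s) / mass v := by
    rw [div_le_div_iff₀ (mass_pos hw hwC) (mass_pos hv hvC),
      intervalIntegral.integral_of_le hy, intervalIntegral.integral_of_le hy]
    exact integral_Ioc_mul_integral_Ioi_le hy (integrableOn_weight hw hwC)
      (integrableOn_weight hv hvC) hcross
  rw [angle, angle, mul_div_assoc, mul_div_assoc]
  exact mul_le_mul_of_nonneg_left hratio (arctan_nonneg.2 hκ)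

theorem hasDerivAt_angle (hv : Measurable v) (hC : ∀ s, |v s| ≤ C) (y : ℝ) :
    HasDerivAt (angle κ v) (arctan κ / mass v * weight v y) y := by
  have hc := continuous_weight hv hC
  have h := (intervalIntegral.integral_hasDerivAt_right (hc.intervalIntegrable 0 y)
    (hc.stronglyMeasurableAtFilter _ _) hc.continuousAt).const_mul (arctan κ / mass v)
  refine h.congr_of_eventuallyEq (Eventually.of_forall fun z => ?_)
  simp only [angle]
  ring

theorem tendsto_angle_atTop (hv : Measurable v) (hC : ∀ s, |v s| ≤ C) :
    Tendsto (angle κ v) atTop (𝓝 (arctan κ)) := by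
  have h := intervalIntegral_tendsto_integral_Ioi 0 (integrableOn_weight hv hC) tendsto_id
  rw [show arctan κ = arctan κ * mass v / mass v by field_simp [(mass_pos hv hC).ne']]
  exact (h.const_mul (arctan κ)).div_const (mass v)

end Angle

section FixedPoint

variable {κ : ℝ}

theorem measurable_coe_orderHom (u : ℝ →o Icc (0 : ℝ) κ) : Measurable fun s => (u s : ℝ) :=
  (Subtype.mono_coe _ |>.comp u.monotone).measurable

theorem abs_coe_orderHom_le (u : ℝ →o Icc (0 : ℝ) κ) (s : ℝ) : |(u s : ℝ)| ≤ κ :=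
  abs_le.2 ⟨by linarith [(u s).2.1, (u s).2.2], (u s).2.2⟩

theorem angle_coe_orderHom_mem_Icc (u : ℝ →o Icc (0 : ℝ) κ) {y : ℝ} (hy : 0 ≤ y) :
    angle κ (fun s => (u s : ℝ)) y ∈ Icc 0 (arctan κ) :=
  angle_mem_Icc ((u 0).2.1.trans (u 0).2.2) (measurable_coe_orderHom u) (abs_coe_orderHom_le u) hy

theorem tan_angle_le_tan_angle {u u' : ℝ →o Icc (0 : ℝ) κ} (huu' : u ≤ u') {x y : ℝ}
    (hx : 0 ≤ x) (hxy : x ≤ y) :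
    tan (angle κ (fun s => (u s : ℝ)) x) ≤ tan (angle κ (fun s => (u' s : ℝ)) y) := by
  have hκ : 0 ≤ κ := (u 0).2.1.trans (u 0).2.2
  refine tan_le_tan_of_nonneg_of_le (angle_coe_orderHom_mem_Icc u hx).1 ?_
    ((angle_coe_orderHom_mem_Icc u' (hx.trans hxy)).2.trans_lt (arctan_lt_pi_div_two κ))
  calc angle κ (fun s => (u s : ℝ)) x ≤ angle κ (fun s => (u' s : ℝ)) x :=
        angle_le_angle_of_sq_le hκ (measurable_coe_orderHom u') (measurable_coe_orderHom u)
          (abs_coe_orderHom_le u') (abs_coe_orderHom_le u)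
          (fun s => pow_le_pow_left₀ (u s).2.1 (huu' s) 2) hx
    _ ≤ angle κ (fun s => (u' s : ℝ)) y :=
        monotone_angle hκ (measurable_coe_orderHom u') (abs_coe_orderHom_le u') hxy

variable (κ) [Fact (0 ≤ κ)]

-- Restricting to nondecreasing functions makes the least fixed point exist and be measurable.
noncomputable def slopeMap : (ℝ →o Icc (0 : ℝ) κ) →o (ℝ →o Icc (0 : ℝ) κ) where
  toFun u :=
    { toFun := fun y => ⟨tan (angle κ (fun s => (u s : ℝ)) (max 0 y)),
        tan_mem_Icc_of_mem_Icc_arctan (angle_coe_orderHom_mem_Icc u (le_max_left 0 y))⟩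
      monotone' := fun _ _ hxy =>
        tan_angle_le_tan_angle le_rfl (le_max_left _ _) (max_le_max le_rfl hxy) }
  monotone' := fun _ _ huu' _ => tan_angle_le_tan_angle huu' (le_max_left _ _) le_rfl

noncomputable def slope (y : ℝ) : ℝ := OrderHom.lfp (α := ℝ →o Icc (0 : ℝ) κ) (slopeMap κ) y

theorem measurable_slope : Measurable (slope κ) := measurable_coe_orderHom _

theorem abs_slope_le (y : ℝ) : |slope κ y| ≤ κ := abs_coe_orderHom_le _ y

theorem slope_eq_tan_angle (y : ℝ) : slope κ y = tan (angle κ (slope κ) (max 0 y)) := by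
  have h := congrArg (fun u : ℝ →o Icc (0 : ℝ) κ => (u y : ℝ))
    (OrderHom.map_lfp (α := ℝ →o Icc (0 : ℝ) κ) (slopeMap κ))
  exact h.symm

theorem continuous_slope : Continuous (slope κ) := by
  have hA : Continuous (angle κ (slope κ)) := continuous_iff_continuousAt.2 fun y =>
    (hasDerivAt_angle (measurable_slope κ) (abs_slope_le κ) y).continuousAt
  rw [funext (slope_eq_tan_angle κ)]
  exact continuousOn_tan.comp_continuous (hA.comp (continuous_const.max continuous_id))
    fun y => (cos_angle_pos Fact.out (measurable_slope κ) (abs_slope_le κ) _).ne'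

theorem slope_abs_sq (y : ℝ) : slope κ |y| ^ 2 = tan (angle κ (slope κ) y) ^ 2 := by
  rw [slope_eq_tan_angle, max_eq_right (abs_nonneg y)]
  rcases le_total 0 y with hy | hy
  · rw [abs_of_nonneg hy]
  · rw [abs_of_nonpos hy, angle_neg, tan_neg, neg_sq]

end FixedPoint

section Profile

variable (κ : ℝ) [Fact (0 ≤ κ)]

noncomputable def height : ℝ := 2 * arctan κ / mass (slope κ)

noncomputable def profile (y : ℝ) : ℝ :=
  height κ * weight (slope κ) y + y * tan (angle κ (slope κ) y)

theorem height_nonneg : 0 ≤ height κ :=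
  div_nonneg (mul_nonneg two_pos.le (arctan_nonneg.2 Fact.out))
    (mass_pos (measurable_slope κ) (abs_slope_le κ)).le

theorem height_le : height κ ≤ 2 * (1 + κ) := by
  have hκ : 0 ≤ κ := Fact.out
  have hmass : π / (2 * (1 + κ)) ≤ mass (slope κ) := by
    refine le_trans ((le_sqrt' (by positivity)).2 ?_)
      (sqrt_pi_div_le_mass (measurable_slope κ) (abs_slope_le κ))
    have h4 : π * (1 + κ ^ 2) ≤ 4 * (1 + κ) ^ 2 := by nlinarith [pi_le_four]
    rw [div_pow, div_le_div_iff₀ (by positivity) (by positivity)]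
    nlinarith [mul_le_mul_of_nonneg_left h4 pi_pos.le]
  have hπ : 0 < π / (2 * (1 + κ)) := by positivity
  calc height κ ≤ π / mass (slope κ) :=
        div_le_div_of_nonneg_right (by linarith [arctan_lt_pi_div_two κ]) (hπ.trans_le hmass).le
    _ ≤ π / (π / (2 * (1 + κ))) := div_le_div_of_nonneg_left pi_pos.le hπ hmass
    _ = 2 * (1 + κ) := by field_simp

theorem cos_angle_slope_ne_zero (y : ℝ) : cos (angle κ (slope κ) y) ≠ 0 :=
  (cos_angle_pos Fact.out (measurable_slope κ) (abs_slope_le κ) y).ne'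

theorem hasDerivAt_angle_slope (y : ℝ) :
    HasDerivAt (angle κ (slope κ)) (height κ / 2 * weight (slope κ) y) y := by
  convert hasDerivAt_angle (κ := κ) (measurable_slope κ) (abs_slope_le κ) y using 1
  rw [height]
  ring

theorem hasDerivAt_expo_slope (y : ℝ) :
    HasDerivAt (expo (slope κ)) (y / 2 * (1 + tan (angle κ (slope κ) y) ^ 2)) y := by
  simpa only [slope_abs_sq] using hasDerivAt_expo (continuous_slope κ) y

theorem hasDerivAt_tan_angle_slope (y : ℝ) :
    HasDerivAt (fun y => tan (angle κ (slope κ) y))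
      ((1 + tan (angle κ (slope κ) y) ^ 2) * (height κ / 2 * weight (slope κ) y)) y := by
  have hcos := cos_angle_slope_ne_zero κ y
  have h := (hasDerivAt_tan hcos).comp y (hasDerivAt_angle_slope κ y)
  rwa [one_div, ← inv_one_add_tan_sq hcos, inv_inv] at h

theorem hasDerivAt_profile (y : ℝ) : HasDerivAt (profile κ) (tan (angle κ (slope κ) y)) y := by
  have h := ((hasDerivAt_expo_slope κ y).neg.exp.const_mul (height κ)).add
    ((hasDerivAt_id y).mul (hasDerivAt_tan_angle_slope κ y))
  refine (h.congr_deriv ?_).congr_of_eventuallyEq (Eventually.of_forall fun z => rfl)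
  rw [weight, Pi.neg_apply, id]
  ring

theorem J1_profile (y : ℝ) : J1 (profile κ) y = 0 := by
  have hd : deriv (profile κ) = fun y => tan (angle κ (slope κ) y) :=
    funext fun y => (hasDerivAt_profile κ y).deriv
  have hpos : 0 < 1 + tan (angle κ (slope κ) y) ^ 2 := by positivity
  rw [J1, hd, (hasDerivAt_tan_angle_slope κ y).deriv, profile]
  field_simp
  ring

theorem profile_neg (y : ℝ) : profile κ (-y) = profile κ y := by
  rw [profile, profile, weight_neg, angle_neg, tan_neg]
  ring

theorem contDiff_angle_slope : ContDiff ℝ ∞ (angle κ (slope κ)) := by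
  refine contDiff_infty_of_contDiff_deriv
    (fun y => (hasDerivAt_angle_slope κ y).differentiableAt) fun n hA => ?_
  have hexpo : ContDiff ℝ (n + 1) (expo (slope κ)) := by
    refine contDiff_succ_iff_deriv.2
      ⟨fun y => (hasDerivAt_expo_slope κ y).differentiableAt, by simp, ?_⟩
    rw [funext fun y => (hasDerivAt_expo_slope κ y).deriv]
    exact (contDiff_id.div_const 2).mul
      (contDiff_const.add ((hA.tan (cos_angle_slope_ne_zero κ)).pow 2))
  rw [funext fun y => (hasDerivAt_angle_slope κ y).deriv]
  exact contDiff_const.mul hexpo.of_succ.neg.exp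

theorem contDiff_profile : ContDiff ℝ ∞ (profile κ) := by
  have htan := (contDiff_angle_slope κ).tan (cos_angle_slope_ne_zero κ)
  have hexpo : ContDiff ℝ ∞ (expo (slope κ)) := by
    refine contDiff_infty_iff_deriv.2
      ⟨fun y => (hasDerivAt_expo_slope κ y).differentiableAt, ?_⟩
    rw [funext fun y => (hasDerivAt_expo_slope κ y).deriv]
    exact (contDiff_id.div_const 2).mul (contDiff_const.add (htan.pow 2))
  exact (contDiff_const.mul hexpo.neg.exp).add (contDiff_id.mul htan)

end Profile

theorem hasDerivAt_mul_exp_div_sq (c : ℝ) {x : ℝ} (hx : x ≠ 0) :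
    HasDerivAt (fun x => c * exp (-(x ^ 2) / 4) / x ^ 2)
      (-(c * exp (-(x ^ 2) / 4) * (x ^ 2 + 4) / (2 * x ^ 3))) x := by
  refine ((((hasDerivAt_pow 2 x).neg.div_const 4).exp.const_mul c).div
    (hasDerivAt_pow 2 x) (pow_ne_zero 2 hx)).congr_deriv ?_
  simp only [Pi.neg_apply]
  field_simp
  ring

section Estimates

variable (κ : ℝ) [Fact (0 ≤ κ)]

theorem tendsto_profile_div_atTop : Tendsto (fun y => profile κ y / y) atTop (𝓝 κ) := by
  have htan : Tendsto (fun y => tan (angle κ (slope κ) y)) atTop (𝓝 κ) := by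
    have h := (continuousAt_tan.2 (cos_arctan_pos κ).ne').tendsto.comp
      (tendsto_angle_atTop (measurable_slope κ) (abs_slope_le κ))
    rwa [tan_arctan] at h
  have hweight : Tendsto (fun y => height κ * weight (slope κ) y / y) atTop (𝓝 0) := by
    refine squeeze_zero' (g := fun y => height κ / y) ?_ ?_
      (tendsto_const_nhds.div_atTop tendsto_id)
    · filter_upwards [eventually_gt_atTop 0] with y hy
      exact div_nonneg (mul_nonneg (height_nonneg κ) (weight_pos _ y).le) hy.le
    · filter_upwards [eventually_gt_atTop 0] with y hy
      exact div_le_div_of_nonneg_right (mul_le_of_le_one_right (height_nonneg κ)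
        (weight_le_one (measurable_slope κ) (abs_slope_le κ) hy.le)) hy.le
  refine (zero_add κ ▸ hweight.add htan).congr' ?_
  filter_upwards [eventually_ne_atTop 0] with y hy
  rw [profile]
  field_simp

theorem hasDerivAt_profile_div_sub {y : ℝ} (hy : y ≠ 0) :
    HasDerivAt (fun y => profile κ y / y - κ) (-(height κ * weight (slope κ) y) / y ^ 2) y := by
  refine (((hasDerivAt_profile κ y).div (hasDerivAt_id y) hy).sub_const κ).congr_deriv ?_
  rw [profile, id]
  field_simp
  ring

theorem tendsto_profile_div_sub : Tendsto (fun y => profile κ y / y - κ) atTop (𝓝 0) := by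
  simpa using (tendsto_profile_div_atTop κ).sub_const κ

theorem profile_div_sub_nonneg {y : ℝ} (hy : 0 < y) : 0 ≤ profile κ y / y - κ :=
  le_of_hasDerivAt_of_tendsto_sub_atTop (f' := fun _ => 0) (fun x _ => hasDerivAt_const x 0)
    (fun x hx => hasDerivAt_profile_div_sub κ (ne_of_gt hx))
    (fun x _ => div_nonpos_of_nonpos_of_nonneg
      (neg_nonpos.2 (mul_nonneg (height_nonneg κ) (weight_pos _ x).le)) (sq_nonneg x))
    (by simpa using (tendsto_profile_div_sub κ).neg) hy

theorem profile_div_sub_le_height_div {y : ℝ} (hy : 0 < y) :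
    profile κ y / y - κ ≤ height κ / y := by
  have hlim : Tendsto (fun x => profile κ x / x - κ - height κ * x⁻¹) atTop (𝓝 0) := by
    simpa using (tendsto_profile_div_sub κ).sub (tendsto_inv_atTop_zero.const_mul (height κ))
  rw [div_eq_mul_inv (height κ)]
  refine le_of_hasDerivAt_of_tendsto_sub_atTop
    (fun x hx => hasDerivAt_profile_div_sub κ (ne_of_gt hx))
    (fun x hx => (hasDerivAt_inv (ne_of_gt hx)).const_mul (height κ)) (fun x hx => ?_) hlim hy
  rw [mul_neg, ← div_eq_mul_inv, neg_div, neg_le_neg_iff]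
  exact div_le_div_of_nonneg_right (mul_le_of_le_one_right (height_nonneg κ)
    (weight_le_one (measurable_slope κ) (abs_slope_le κ) (le_of_lt hx))) (sq_nonneg x)

theorem profile_div_sub_le_exp_div {y : ℝ} (hy : 0 < y) :
    profile κ y / y - κ ≤ height κ * exp (-(y ^ 2) / 4) / y ^ 2 := by
  have hlim : Tendsto (fun x => profile κ x / x - κ - height κ * exp (-(x ^ 2) / 4) / x ^ 2)
      atTop (𝓝 0) := by
    have hexp : Tendsto (fun x : ℝ => -(x ^ 2) / 4) atTop atBot :=
      (tendsto_neg_atTop_atBot.comp (tendsto_pow_atTop two_ne_zero)).atBot_div_const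
        (by norm_num)
    simpa using (tendsto_profile_div_sub κ).sub (((tendsto_exp_atBot.comp hexp).const_mul
      (height κ)).div_atTop (tendsto_pow_atTop two_ne_zero))
  refine le_of_hasDerivAt_of_tendsto_sub_atTop
    (fun x hx => hasDerivAt_profile_div_sub κ (ne_of_gt hx))
    (fun x hx => hasDerivAt_mul_exp_div_sq (height κ) (ne_of_gt hx)) (fun x hx => ?_) hlim hy
  have hx : 0 < x := hx
  have hw := weight_le_exp (measurable_slope κ) (abs_slope_le κ) hx.le
  have hc := height_nonneg κ
  rw [neg_div (x ^ 2), neg_le_neg_iff, div_le_div_iff₀ (by positivity) (by positivity)]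
  calc height κ * weight (slope κ) x * (2 * x ^ 3)
      ≤ height κ * exp (-(x ^ 2) / 4) * (2 * x ^ 3) := by gcongr
    _ ≤ height κ * exp (-(x ^ 2) / 4) * ((x ^ 2 + 4) * x ^ 2) :=
        mul_le_mul_of_nonneg_left (by nlinarith [sq_nonneg (x - 1)]) (by positivity)
    _ = height κ * exp (-(x ^ 2) / 4) * (x ^ 2 + 4) * x ^ 2 := by ring

theorem profile_sub_mul_eq {y : ℝ} (hy : y ≠ 0) :
    profile κ y - κ * y = y * (profile κ y / y - κ) := by
  field_simp

theorem profile_sub_mul_nonneg {y : ℝ} (hy : 0 < y) : 0 ≤ profile κ y - κ * y := by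
  rw [profile_sub_mul_eq κ hy.ne']
  exact mul_nonneg hy.le (profile_div_sub_nonneg κ hy)

theorem profile_sub_mul_le {y : ℝ} (hy : 0 < y) :
    profile κ y - κ * y ≤ min (2 * exp 1 * (κ + 2) / y * exp (-(y ^ 2) / 4)) (3 * κ + 2) := by
  have hκ : 0 ≤ κ := Fact.out
  have hc := height_le κ
  have he : 1 ≤ exp 1 := one_le_exp zero_le_one
  rw [profile_sub_mul_eq κ hy.ne']
  refine le_min ?_ ?_
  · calc y * (profile κ y / y - κ) ≤ y * (height κ * exp (-(y ^ 2) / 4) / y ^ 2) :=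
          mul_le_mul_of_nonneg_left (profile_div_sub_le_exp_div κ hy) hy.le
      _ = height κ / y * exp (-(y ^ 2) / 4) := by field_simp
      _ ≤ 2 * exp 1 * (κ + 2) / y * exp (-(y ^ 2) / 4) := by
          gcongr
          nlinarith
  · calc y * (profile κ y / y - κ) ≤ y * (height κ / y) :=
          mul_le_mul_of_nonneg_left (profile_div_sub_le_height_div κ hy) hy.le
      _ = height κ := by field_simp
      _ ≤ 3 * κ + 2 := by linarith

end Estimates

end SelfExpander

/-- For `κ > 0` there exists a smooth even function `φ̂_κ : ℝ → ℝ` solving `𝒥₁ φ̂_κ = 0`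
everywhere with `0 ≤ φ̂_κ(y) - κ y ≤ min{ (2e(κ+2)/y) e^{-y²/4}, 3κ+2 }` for `y ∈ (0,∞)`;
in particular `φ̂_κ(y)/y → κ` as `y → ∞`. -/
theorem stmt5 (κ : ℝ) (hκ : 0 < κ) :
    ∃ φ : ℝ → ℝ, ContDiff ℝ (⊤ : ℕ∞) φ ∧ (∀ y : ℝ, φ (-y) = φ y) ∧
      (∀ y : ℝ, J1 φ y = 0) ∧
      (∀ y : ℝ, 0 < y → 0 ≤ φ y - κ * y ∧
        φ y - κ * y ≤
          min (2 * Real.exp 1 * (κ + 2) / y * Real.exp (-(y ^ 2) / 4)) (3 * κ + 2)) ∧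
      Filter.Tendsto (fun y : ℝ => φ y / y) Filter.atTop (nhds κ) := by
  have : Fact (0 ≤ κ) := ⟨hκ.le⟩
  exact ⟨SelfExpander.profile κ, SelfExpander.contDiff_profile κ, SelfExpander.profile_neg κ,
    SelfExpander.J1_profile κ, fun _ hy => ⟨SelfExpander.profile_sub_mul_nonneg κ hy,
      SelfExpander.profile_sub_mul_le κ hy⟩, SelfExpander.tendsto_profile_div_atTop κ⟩
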